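/- Let A be the 8×16 real matrix whose eight rows, acting on w = (w_0,…,w_15) ∈ ℝ^16, compute w_1+w_15−w_7−w_9, w_2+w_4−w_4−w_6, w_10+w_12−w_12−w_14, w_0+w_10−w_0−w_9, w_3+w_6−w_7−w_13, w_3+w_5−w_11−w_13, w_2+w_5−w_1−w_11, and w_8+w_14−w_8−w_15. Then A has full row rank 8, A𝟙 = 0 for the all-ones vector 𝟙, and for every b ∈ ℝ^8 there exists w ∈ ℝ^16 with A w = b and w_i ≥ 0 for all i. -/

import Mathlib

/-!
Since the all-ones vector `𝟙` lies in the kernel of `A`, any solution `w₀` of `A w = b` can be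
shifted to `w₀ + t • 𝟙` with `t = ∑ |w₀ i|`, which is still a solution and is non-negative.
Solutions exist for every `b` because an explicit one, linear in `b`, is available; the same
surjectivity gives full row rank.
-/

/-- The length-equalization system matrix for the genus-2 (5-corner region) cutgraph pattern. -/
def Amat : Matrix (Fin 8) (Fin 16) ℝ :=
  Matrix.of ![![0,1,0,0,0,0,0,-1,0,-1,0,0,0,0,0,1],
    ![0,0,1,0,0,0,-1,0,0,0,0,0,0,0,0,0],
    ![0,0,0,0,0,0,0,0,0,0,1,0,0,0,-1,0],
    ![0,0,0,0,0,0,0,0,0,-1,1,0,0,0,0,0],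
    ![0,0,0,1,0,0,1,-1,0,0,0,0,0,-1,0,0],
    ![0,0,0,1,0,1,0,0,0,0,0,-1,0,-1,0,0],
    ![0,-1,1,0,0,1,0,0,0,0,0,-1,0,0,0,0],
    ![0,0,0,0,0,0,0,0,0,0,0,0,0,0,1,-1]]

open Matrix

theorem Matrix.rank_eq_card_height_of_surjective {m n R : Type*} [Fintype m] [Fintype n]
    [CommRing R] [StrongRankCondition R] (A : Matrix m n R) (hA : Function.Surjective A.mulVec) :
    A.rank = Fintype.card m := by
  rw [Matrix.rank, LinearMap.range_eq_top.mpr hA, finrank_top, Module.finrank_fintype_fun_eq_card]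

theorem Matrix.exists_nonneg_mulVec_eq_of_mulVec_one_eq_zero {m n R : Type*} [Fintype n]
    [CommRing R] [LinearOrder R] [IsOrderedRing R] (A : Matrix m n R)
    (hA : A *ᵥ (fun _ => 1) = 0) (w₀ : n → R) :
    ∃ w : n → R, A *ᵥ w = A *ᵥ w₀ ∧ ∀ i, 0 ≤ w i := by
  refine ⟨w₀ + (∑ j, |w₀ j|) • fun _ => 1, ?_, fun i => ?_⟩
  · rw [mulVec_add, mulVec_smul, hA, smul_zero, add_zero]
  · have hi : |w₀ i| ≤ ∑ j, |w₀ j| :=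
      Finset.single_le_sum (fun j _ => abs_nonneg (w₀ j)) (Finset.mem_univ i)
    simp only [Pi.add_apply, Pi.smul_apply, smul_eq_mul, mul_one]
    exact neg_le_iff_add_nonneg.mp ((neg_le_neg hi).trans (neg_abs_le _))

theorem Amat_mulVec_one : Amat *ᵥ (fun _ => 1) = 0 := by
  ext i
  fin_cases i <;> simp [Amat, mulVec, dotProduct, Fin.sum_univ_succ]

/-- Every nonsingular `8 × 8` minor of `Amat` is `±2`, so the halves cannot be avoided. -/
noncomputable def particularSolution (b : Fin 8 → ℝ) : Fin 16 → ℝ :=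
  let s := (b 0 - b 1 + b 2 - b 3 + b 4 - b 5 + b 6 + b 7) / 2
  ![0, b 0 + b 2 - b 3 + b 7, b 1 + s, b 4 - s, 0, 0, s, 0,
    0, b 2 - b 3 + b 7, b 2 + b 7, b 4 - b 5 - s, 0, 0, b 7, 0]

theorem Amat_mulVec_particularSolution (b : Fin 8 → ℝ) : Amat *ᵥ particularSolution b = b := by
  ext i
  fin_cases i <;> simp [Amat, particularSolution, mulVec, dotProduct, Fin.sum_univ_succ] <;> ring

theorem Amat_mulVec_surjective : Function.Surjective Amat.mulVec :=
  fun b => ⟨particularSolution b, Amat_mulVec_particularSolution b⟩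

/-- The matrix has full row rank 8, the all-ones vector lies in its kernel, and
the system `A w = b` has a non-negative solution for every right-hand side `b`. -/
theorem equalizable :
    Amat.rank = 8 ∧ Amat.mulVec (fun _ => 1) = 0 ∧
    ∀ b : Fin 8 → ℝ, ∃ w : Fin 16 → ℝ, Amat.mulVec w = b ∧ ∀ i, 0 ≤ w i := by
  refine ⟨?_, Amat_mulVec_one, fun b => ?_⟩
  · simpa using Amat.rank_eq_card_height_of_surjective Amat_mulVec_surjective
  · obtain ⟨w, hw, hw_nonneg⟩ :=
      Amat.exists_nonneg_mulVec_eq_of_mulVec_one_eq_zero Amat_mulVec_one (particularSolution b)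
    exact ⟨w, hw.trans (Amat_mulVec_particularSolution b), hw_nonneg⟩
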